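/- arXiv:0708.4244 — 2 statements merged into one kernel-verified Lean document; each statement's English description precedes it below -/
import Mathlib

section
/- Let ε_1 = (1,1,1), ε_2 = (−1,1,−1), ε_3 = (1,−1,−1), ε_4 = (−1,−1,1) in {±1}³, and for i,j,k ∈ {1,2,3} define T_{ijk} : ℝ³ → ℝ by T_{ijk}(x) = Σ_{a=1}^{4} ε_a^{(i)} ε_a^{(j)} ε_a^{(k)} · (1/16) · tan( π/4 − (ε_a · x)/4 ) + (1/4)·tan(−x_i/2) if i = j = k (no tan(−x_i/2) term otherwise). Then for every x ∈ ℝ³ such that cos(π/4 − (ε_a·x)/4) ≠ 0 for a = 1,…,4 and cos(x_i/2) ≠ 0 for i = 1,2,3, one has T_{112}(x)² + T_{122}(x)² + T_{123}(x)² = T_{111}(x)·T_{122}(x) + T_{112}(x)·T_{222}(x) + T_{113}(x)·T_{223}(x) + 1/16. -/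
/-!
Write `θ_a = π/4 − (ε_a · x)/4` (indices from 0, as in Lean). The pairwise sums of these angles
are `π/2 ∓ x_i/2`, so the tangent addition formula gives four quadratic relations between
`tan θ_a` and `tan (x_i/2)`. After expanding the `T_{ijk}`, the first WDVV equation is exactly
`1/64` times a signed sum of these four relations.
-/

open Real

/-- The four sign vectors `ε_1, …, ε_4` appearing in the `ℤ/2 × ℤ/2`
generating function. -/
noncomputable def eps : Fin 4 → Fin 3 → ℝ :=
  ![![1, 1, 1], ![-1, 1, -1], ![1, -1, -1], ![-1, -1, 1]]

/-- The third partial derivatives `T_{ijk} = ∂³F/∂x_i∂x_j∂x_k` of the explicit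
`ℤ/2 × ℤ/2` generating function. -/
noncomputable def T (i j k : Fin 3) (x : Fin 3 → ℝ) : ℝ :=
  (∑ a : Fin 4, eps a i * eps a j * eps a k * (1/16) *
      Real.tan (Real.pi / 4 - (∑ t : Fin 3, eps a t * x t) / 4))
  + (if i = j ∧ j = k then (1/4) * Real.tan (-(x i) / 2) else 0)

namespace Real

theorem tan_mul_add_tan_of_add_add_eq_pi_div_two {u v w : ℝ} (hu : cos u ≠ 0)
    (hv : cos v ≠ 0) (hw : cos w ≠ 0) (h : u + v + w = π / 2) :
    tan w * (tan u + tan v) = 1 - tan u * tan v := by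
  obtain rfl : w = π / 2 - (u + v) := by linarith
  rw [cos_pi_div_two_sub] at hw
  rw [tan_eq_sin_div_cos, tan_eq_sin_div_cos u, tan_eq_sin_div_cos v, sin_pi_div_two_sub,
    cos_pi_div_two_sub]
  field_simp
  rw [sin_add, cos_add]
  ring

theorem tan_mul_add_tan_of_add_sub_eq_pi_div_two {u v w : ℝ} (hu : cos u ≠ 0)
    (hv : cos v ≠ 0) (hw : cos w ≠ 0) (h : u + v - w = π / 2) :
    tan w * (tan u + tan v) = tan u * tan v - 1 := by
  have := tan_mul_add_tan_of_add_add_eq_pi_div_two hu hv (w := -w) (by rwa [cos_neg])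
    (by linarith)
  rw [tan_neg] at this
  linarith

end Real

noncomputable def kleinAngle (a : Fin 4) (x : Fin 3 → ℝ) : ℝ :=
  π / 4 - (∑ t : Fin 3, eps a t * x t) / 4

theorem T_eq_sum_tan_kleinAngle (i j k : Fin 3) (x : Fin 3 → ℝ) :
    T i j k x = (∑ a : Fin 4, eps a i * eps a j * eps a k * (1/16) * tan (kleinAngle a x))
      + (if i = j ∧ j = k then (1/4) * tan (-(x i) / 2) else 0) :=
  rfl

section

variable (x : Fin 3 → ℝ)

theorem kleinAngle_zero_add_kleinAngle_one :
    kleinAngle 0 x + kleinAngle 1 x + x 1 / 2 = π / 2 := by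
  simp only [kleinAngle, eps, Fin.sum_univ_three, Matrix.cons_val]
  ring

theorem kleinAngle_zero_add_kleinAngle_two :
    kleinAngle 0 x + kleinAngle 2 x + x 0 / 2 = π / 2 := by
  simp only [kleinAngle, eps, Fin.sum_univ_three, Matrix.cons_val]
  ring

theorem kleinAngle_one_add_kleinAngle_three :
    kleinAngle 1 x + kleinAngle 3 x - x 0 / 2 = π / 2 := by
  simp only [kleinAngle, eps, Fin.sum_univ_three, Matrix.cons_val]
  ring

theorem kleinAngle_two_add_kleinAngle_three :
    kleinAngle 2 x + kleinAngle 3 x - x 1 / 2 = π / 2 := by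
  simp only [kleinAngle, eps, Fin.sum_univ_three, Matrix.cons_val]
  ring

end

theorem klein_four_WDVV_first (x : Fin 3 → ℝ)
    (hcos : ∀ a : Fin 4, Real.cos (Real.pi / 4 - (∑ t : Fin 3, eps a t * x t) / 4) ≠ 0)
    (hcos' : ∀ i : Fin 3, Real.cos (x i / 2) ≠ 0) :
    T 0 0 1 x ^ 2 + T 0 1 1 x ^ 2 + T 0 1 2 x ^ 2
      = T 0 0 0 x * T 0 1 1 x + T 0 0 1 x * T 1 1 1 x + T 0 0 2 x * T 1 1 2 x + 1/16 := by
  have hθ : ∀ a, cos (kleinAngle a x) ≠ 0 := hcos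
  have h01 := tan_mul_add_tan_of_add_add_eq_pi_div_two (hθ 0) (hθ 1) (hcos' 1)
    (kleinAngle_zero_add_kleinAngle_one x)
  have h02 := tan_mul_add_tan_of_add_add_eq_pi_div_two (hθ 0) (hθ 2) (hcos' 0)
    (kleinAngle_zero_add_kleinAngle_two x)
  have h13 := tan_mul_add_tan_of_add_sub_eq_pi_div_two (hθ 1) (hθ 3) (hcos' 0)
    (kleinAngle_one_add_kleinAngle_three x)
  have h23 := tan_mul_add_tan_of_add_sub_eq_pi_div_two (hθ 2) (hθ 3) (hcos' 1)
    (kleinAngle_two_add_kleinAngle_three x)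
  simp only [T_eq_sum_tan_kleinAngle, Fin.sum_univ_four, eps, Matrix.cons_val, neg_div, tan_neg,
    Fin.reduceEq, and_false, false_and, and_self, ↓reduceIte]
  linear_combination (1/64) * (h01 + h02 - h13 - h23)
end

section
/- Let A, A' : ℕ³ → ℚ both satisfy: (i) invariance under every permutation of the three arguments; (ii) A(n1,n2,n3) = 0 unless n1 ≡ n2 ≡ n3 (mod 2); (iii) A(m) = 0 whenever m1 + m2 + m3 < 3; (iv) A(1,1,1) = 1/4; and (v) conditions (W1) and (W2). If in addition A(n,0,0) = A'(n,0,0) for all n ∈ ℕ, then A = A'. -/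
open Finset

/-- The standard basis vector `e_c` of `ℕ³`. -/
def e (c : Fin 3) : Fin 3 → ℕ := Pi.single c 1

/-- Product of binomial coefficients `B(m,p) = C(m₁,p₁)·C(m₂,p₂)·C(m₃,p₃)`. -/
def B (m p : Fin 3 → ℕ) : ℕ := ∏ i : Fin 3, Nat.choose (m i) (p i)

/-!
Induct on the total degree. By the parity condition the only nonzero integral of degree three is
`A(1,1,1) = 1/4`. If `A` and `A'` agree below degree `n` and `m ≠ 0` has degree `n - 3`, then in
the difference of a WDVV equation for `A` and for `A'` at `m` only the terms `p = 0` and `p = m`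
survive, and these are linear in `D = A - A'` at degree `n`, with degree-three integrals as
coefficients. So (W1) gives `D(m + (1,1,1)) = 0`, i.e. `D` vanishes on vectors with positive
entries, and (W2) gives `D(m + (1,0,2)) + D(m + (1,2,0)) = D(m + (3,0,0))`, which reduces
`D(a,b,0)` to `D(a+2,b-2,0)` and finally to `D(n,0,0) = 0`. Parity and symmetry do the rest.
-/

def deg (m : Fin 3 → ℕ) : ℕ := m 0 + m 1 + m 2

lemma deg_add_e (m : Fin 3 → ℕ) (a : Fin 3) : deg (m + e a) = deg m + 1 := by
  fin_cases a <;> simp [deg, e] <;> omega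

lemma deg_add_e_add_e_add_e (m : Fin 3 → ℕ) (a b c : Fin 3) :
    deg (m + e a + e b + e c) = deg m + 3 := by
  simp only [deg_add_e]

lemma deg_e_add_e_add_e (a b c : Fin 3) : deg (e a + e b + e c) = 3 := by
  simpa [deg] using deg_add_e_add_e_add_e 0 a b c

lemma deg_pos {m : Fin 3 → ℕ} (hm : m ≠ 0) : 0 < deg m := by
  by_contra h
  exact hm (funext fun i => by fin_cases i <;> simp [deg] at h ⊢ <;> omega)

lemma deg_lt_deg {p m : Fin 3 → ℕ} (h : p < m) : deg p < deg m := by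
  obtain ⟨hle, i, hi⟩ := Pi.lt_def.mp h
  have : p 0 ≤ m 0 := hle 0
  have : p 1 ≤ m 1 := hle 1
  have : p 2 ≤ m 2 := hle 2
  fin_cases i <;> simp [deg] at hi ⊢ <;> omega

lemma deg_sub {p m : Fin 3 → ℕ} (h : p ≤ m) : deg (m - p) = deg m - deg p := by
  have : p 0 ≤ m 0 := h 0
  have : p 1 ≤ m 1 := h 1
  have : p 2 ≤ m 2 := h 2
  simp only [deg, Pi.sub_apply]; omega

lemma deg_comp (m : Fin 3 → ℕ) (σ : Equiv.Perm (Fin 3)) : deg (m ∘ σ) = deg m := by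
  simpa [deg, Fin.sum_univ_three] using Equiv.sum_comp σ m

lemma B_zero_right (m : Fin 3 → ℕ) : B m 0 = 1 := by simp [B]

lemma B_self (m : Fin 3 → ℕ) : B m m = 1 := by simp [B]

lemma e_eq_vec : e 0 = ![1, 0, 0] ∧ e 1 = ![0, 1, 0] ∧ e 2 = ![0, 0, 1] := by decide

lemma comp_swap_zero_one (a b c : ℕ) : ![a, b, c] ∘ Equiv.swap 0 1 = ![b, a, c] := by
  funext i; fin_cases i <;> rfl

lemma comp_swap_one_two (a b c : ℕ) : ![a, b, c] ∘ Equiv.swap 1 2 = ![a, c, b] := by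
  funext i; fin_cases i <;> rfl

/-- The coefficient of `t^m / m!` in the WDVV equation with insertions `a, b | c, d`:
(W1) is `wdvv A 0 1 0 1 m = if m = 0 then 1/16 else 0` and (W2) is `wdvv A 0 1 0 2 m = 0`. -/
def wdvv (A : (Fin 3 → ℕ) → ℚ) (a b c d : Fin 3) (m : Fin 3 → ℕ) : ℚ :=
  ∑ p ∈ Icc 0 m, (B m p : ℚ) * ∑ i : Fin 3,
    (A (p + e a + e b + e i) * A (m - p + e i + e c + e d)
      - A (p + e a + e c + e i) * A (m - p + e i + e b + e d))

section WDVV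

variable {A A' : (Fin 3 → ℕ) → ℚ} {n : ℕ}

lemma wdvv_sub_wdvv (hA : ∀ x, deg x < n → A x = A' x) {m : Fin 3 → ℕ} (hm : m ≠ 0)
    (hn : deg m + 3 = n) (a b c d : Fin 3) :
    wdvv A a b c d m - wdvv A' a b c d m
      = ∑ i : Fin 3,
        (A (e a + e b + e i) * (A - A') (m + e i + e c + e d)
          - A (e a + e c + e i) * (A - A') (m + e i + e b + e d)
          + A (e i + e c + e d) * (A - A') (m + e a + e b + e i)
          - A (e i + e b + e d) * (A - A') (m + e a + e c + e i)) := by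
  have hA₃ : ∀ (q : Fin 3 → ℕ) (x y z : Fin 3), deg q + 3 < n →
      A (q + e x + e y + e z) = A' (q + e x + e y + e z) := fun q x y z hq =>
    hA _ (by rwa [deg_add_e_add_e_add_e])
  have h₃ : ∀ x y z : Fin 3, A (e x + e y + e z) = A' (e x + e y + e z) := fun x y z =>
    hA _ (by have := deg_pos hm; rw [deg_e_add_e_add_e]; omega)
  rw [wdvv, wdvv, ← sum_sub_distrib, sum_eq_add_of_mem 0 m (by simp) (by simp) (Ne.symm hm)]
  · simp only [B_zero_right, B_self, tsub_zero, tsub_self, zero_add, Nat.cast_one, one_mul,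
      ← sum_sub_distrib, ← sum_add_distrib, Pi.sub_apply, ← h₃]
    exact sum_congr rfl fun i _ => by ring
  · rintro p hp ⟨hp0, hpm⟩
    have hle : p ≤ m := (mem_Icc.mp hp).2
    have hlt := deg_lt_deg (lt_of_le_of_ne hle hpm)
    have hsub := deg_sub hle
    have hpos := deg_pos hp0
    rw [← mul_sub, sub_eq_zero.mpr, mul_zero]
    refine sum_congr rfl fun i _ => ?_
    rw [hA₃ p, hA₃ p, hA₃ (m - p), hA₃ (m - p)]
    all_goals omega

lemma apply_of_deg_eq_three
    (hpar : ∀ m : Fin 3 → ℕ, ¬(m 0 % 2 = m 1 % 2 ∧ m 1 % 2 = m 2 % 2) → A m = 0)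
    (h111 : A ![1, 1, 1] = 1/4) {v : Fin 3 → ℕ} (hv : deg v = 3) :
    A v = if v = ![1, 1, 1] then 1/4 else 0 := by
  split_ifs with h
  · rw [h, h111]
  · refine hpar v fun ⟨h01, h12⟩ => h (funext fun i => ?_)
    unfold deg at hv
    fin_cases i <;> simp <;> omega

lemma eq_add_one_one_one_of_wdvv (hA : ∀ x, deg x < n → A x = A' x)
    (hpar : ∀ m : Fin 3 → ℕ, ¬(m 0 % 2 = m 1 % 2 ∧ m 1 % 2 = m 2 % 2) → A m = 0)
    (h111 : A ![1, 1, 1] = 1/4) {m : Fin 3 → ℕ} (hm : m ≠ 0) (hn : deg m + 3 = n)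
    (hW : wdvv A 0 1 0 1 m = wdvv A' 0 1 0 1 m) :
    A (m + ![1, 1, 1]) = A' (m + ![1, 1, 1]) := by
  have h := wdvv_sub_wdvv hA hm hn 0 1 0 1
  rw [hW, sub_self] at h
  simp only [Fin.sum_univ_three, apply_of_deg_eq_three hpar h111 (deg_e_add_e_add_e _ _ _)] at h
  norm_num [e_eq_vec, add_assoc, -Matrix.add_cons] at h
  linear_combination -2 * h

lemma relation_add_one_zero_two_of_wdvv (hA : ∀ x, deg x < n → A x = A' x)
    (hpar : ∀ m : Fin 3 → ℕ, ¬(m 0 % 2 = m 1 % 2 ∧ m 1 % 2 = m 2 % 2) → A m = 0)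
    (h111 : A ![1, 1, 1] = 1/4) {m : Fin 3 → ℕ} (hm : m ≠ 0) (hn : deg m + 3 = n)
    (hW : wdvv A 0 1 0 2 m = wdvv A' 0 1 0 2 m) :
    (A - A') (m + ![1, 0, 2]) + (A - A') (m + ![1, 2, 0]) = (A - A') (m + ![3, 0, 0]) := by
  have h := wdvv_sub_wdvv hA hm hn 0 1 0 2
  rw [hW, sub_self] at h
  simp only [Fin.sum_univ_three, apply_of_deg_eq_three hpar h111 (deg_e_add_e_add_e _ _ _)] at h
  norm_num [e_eq_vec, add_assoc, -Matrix.add_cons] at h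
  simp only [Pi.sub_apply]
  linear_combination -4 * h

lemma eq_of_forall_one_le (hA : ∀ x, deg x < n → A x = A' x)
    (hpar : ∀ m : Fin 3 → ℕ, ¬(m 0 % 2 = m 1 % 2 ∧ m 1 % 2 = m 2 % 2) → A m = 0)
    (h111 : A ![1, 1, 1] = 1/4)
    (hW : ∀ m, wdvv A 0 1 0 1 m = if m = 0 then 1/16 else 0)
    (hW' : ∀ m, wdvv A' 0 1 0 1 m = if m = 0 then 1/16 else 0)
    {x : Fin 3 → ℕ} (hx : ∀ i, 1 ≤ x i) (hx1 : x ≠ ![1, 1, 1]) (hn : deg x = n) :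
    A x = A' x := by
  have := hx 0; have := hx 1; have := hx 2
  have hsplit : x = (x - ![1, 1, 1]) + ![1, 1, 1] := by
    funext i; fin_cases i <;> simp [-Matrix.sub_cons, -Matrix.add_cons] <;> omega
  have hm : x - ![1, 1, 1] ≠ 0 := fun h => hx1 (by rw [hsplit, h, zero_add])
  rw [hsplit]
  refine eq_add_one_one_one_of_wdvv hA hpar h111 hm ?_ (by rw [hW, hW', if_neg hm])
  unfold deg at hn ⊢; simp [-Matrix.sub_cons]; omega

end WDVV

section Vanishing

variable {D : (Fin 3 → ℕ) → ℚ} {n : ℕ}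

lemma eq_zero_at_even_even_zero
    (hsymm : ∀ (σ : Equiv.Perm (Fin 3)) (m : Fin 3 → ℕ), D (m ∘ σ) = D m)
    (h0 : ∀ k, D ![k, 0, 0] = 0)
    (hpos : ∀ x, (∀ i, 1 ≤ x i) → x ≠ ![1, 1, 1] → deg x = n → D x = 0)
    (hrel : ∀ m, m ≠ 0 → deg m + 3 = n →
      D (m + ![1, 0, 2]) + D (m + ![1, 2, 0]) = D (m + ![3, 0, 0])) (b : ℕ) :
    ∀ a, a % 2 = 0 → b % 2 = 0 → a + b = n → D ![a, b, 0] = 0 := by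
  induction b using Nat.strong_induction_on with
  | _ b ih =>
  intro a ha hb hab
  obtain _ | _ | b := b
  · exact h0 a
  · omega
  obtain _ | _ | a := a
  · rw [← comp_swap_zero_one, hsymm, h0]
  · omega
  show D ![a + 2, b + 2, 0] = 0
  have h := hrel ![a + 1, b, 0] (by simp) (by simp [deg]; omega)
  simp only [Matrix.cons_add_cons, Matrix.empty_add_empty, add_assoc, Nat.reduceAdd, add_zero,
    zero_add] at h
  have hshift : D ![a + 4, b, 0] = 0 := ih b (by omega) (a + 4) (by omega) (by omega) (by omega)
  rcases Nat.eq_zero_or_pos b with rfl | hb0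
  · rw [zero_add, ← comp_swap_one_two, hsymm] at h
    linear_combination h / 2 + hshift / 2
  · have hdiag : D ![a + 2, b, 2] = 0 := hpos _ (fun i => by fin_cases i <;> simp; omega)
      (by simp) (by simp [deg]; omega)
    linear_combination h + hshift - hdiag

lemma eq_zero_of_deg_eq
    (hsymm : ∀ (σ : Equiv.Perm (Fin 3)) (m : Fin 3 → ℕ), D (m ∘ σ) = D m)
    (h0 : ∀ k, D ![k, 0, 0] = 0)
    (hpos : ∀ x, (∀ i, 1 ≤ x i) → x ≠ ![1, 1, 1] → deg x = n → D x = 0)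
    (hrel : ∀ m, m ≠ 0 → deg m + 3 = n →
      D (m + ![1, 0, 2]) + D (m + ![1, 2, 0]) = D (m + ![3, 0, 0]))
    (hpar : ∀ m : Fin 3 → ℕ, ¬(m 0 % 2 = m 1 % 2 ∧ m 1 % 2 = m 2 % 2) → D m = 0)
    (h111 : D ![1, 1, 1] = 0) {m : Fin 3 → ℕ} (hm : deg m = n) : D m = 0 := by
  by_cases hp : ¬(m 0 % 2 = m 1 % 2 ∧ m 1 % 2 = m 2 % 2)
  · exact hpar m hp
  rw [not_not] at hp
  by_cases h1 : m = ![1, 1, 1]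
  · rw [h1, h111]
  by_cases hge : ∀ i, 1 ≤ m i
  · exact hpos m hge h1 hm
  obtain ⟨i, hi⟩ : ∃ i, m i = 0 := by simpa using hge
  have heven : ∀ j, m j % 2 = 0 := fun j => by
    fin_cases i <;> fin_cases j <;> simp at hi ⊢ <;> omega
  set y := m ∘ Equiv.swap i 2 with hy
  have hy2 : y = ![y 0, y 1, 0] := funext fun j => by fin_cases j <;> simp [y, hi]
  have hydeg : y 0 + y 1 = n := by
    rw [← hm, ← deg_comp m (Equiv.swap i 2), ← hy, hy2]; simp [deg]
  rw [← hsymm (Equiv.swap i 2), ← hy, hy2]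
  exact eq_zero_at_even_even_zero hsymm h0 hpos hrel _ _ (heven _) (heven _) hydeg

end Vanishing

theorem klein_four_integrals_unique_general
    (A A' : (Fin 3 → ℕ) → ℚ)
    -- (i) symmetry under permutations of the three arguments
    (hsymm : ∀ (σ : Equiv.Perm (Fin 3)) (m : Fin 3 → ℕ), A (m ∘ σ) = A m)
    (hsymm' : ∀ (σ : Equiv.Perm (Fin 3)) (m : Fin 3 → ℕ), A' (m ∘ σ) = A' m)
    -- (ii) monodromy condition: vanishing unless all parities agree
    (hpar : ∀ m : Fin 3 → ℕ, ¬(m 0 % 2 = m 1 % 2 ∧ m 1 % 2 = m 2 % 2) → A m = 0)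
    (hpar' : ∀ m : Fin 3 → ℕ, ¬(m 0 % 2 = m 1 % 2 ∧ m 1 % 2 = m 2 % 2) → A' m = 0)
    -- (iv) the length-three integral ⟨ζ₁ζ₂ζ₃⟩ = 1/4
    (h111 : A ![1, 1, 1] = 1/4) (h111' : A' ![1, 1, 1] = 1/4)
    -- (v) WDVV equation (W1)
    (hW1 : ∀ m : Fin 3 → ℕ,
      ∑ p ∈ Finset.Icc 0 m, (B m p : ℚ) *
        ∑ c : Fin 3,
          (A (p + e 0 + e 1 + e c) * A (m - p + e c + e 0 + e 1)
            - A (p + e 0 + e 0 + e c) * A (m - p + e c + e 1 + e 1))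
      = if m = 0 then 1/16 else 0)
    (hW1' : ∀ m : Fin 3 → ℕ,
      ∑ p ∈ Finset.Icc 0 m, (B m p : ℚ) *
        ∑ c : Fin 3,
          (A' (p + e 0 + e 1 + e c) * A' (m - p + e c + e 0 + e 1)
            - A' (p + e 0 + e 0 + e c) * A' (m - p + e c + e 1 + e 1))
      = if m = 0 then 1/16 else 0)
    -- (v) WDVV equation (W2)
    (hW2 : ∀ m : Fin 3 → ℕ,
      ∑ p ∈ Finset.Icc 0 m, (B m p : ℚ) *
        ∑ c : Fin 3,
          (A (p + e 0 + e 1 + e c) * A (m - p + e c + e 0 + e 2)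
            - A (p + e 0 + e 0 + e c) * A (m - p + e c + e 1 + e 2)) = 0)
    (hW2' : ∀ m : Fin 3 → ℕ,
      ∑ p ∈ Finset.Icc 0 m, (B m p : ℚ) *
        ∑ c : Fin 3,
          (A' (p + e 0 + e 1 + e c) * A' (m - p + e c + e 0 + e 2)
            - A' (p + e 0 + e 0 + e c) * A' (m - p + e c + e 1 + e 2)) = 0)
    -- agreement of the one-variable specializations ⟨ζ₁ⁿ⟩
    (hspec : ∀ n : ℕ, A ![n, 0, 0] = A' ![n, 0, 0]) :
    A = A' := by
  suffices h : ∀ n m, deg m = n → (A - A') m = 0 from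
    funext fun m => sub_eq_zero.mp (h _ m rfl)
  intro n
  induction n using Nat.strong_induction_on with
  | _ n ih =>
  have hA : ∀ x, deg x < n → A x = A' x := fun x hx => sub_eq_zero.mp (ih _ hx x rfl)
  intro m hm
  refine eq_zero_of_deg_eq (fun σ x => by simp [hsymm, hsymm'])
    (fun k => sub_eq_zero.mpr (hspec k))
    (fun x hx hx1 hn => sub_eq_zero.mpr (eq_of_forall_one_le hA hpar h111 hW1 hW1' hx hx1 hn))
    (fun x hx hn => relation_add_one_zero_two_of_wdvv hA hpar h111 hx hn
      ((hW2 x).trans (hW2' x).symm))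
    (fun x hx => by simp [hpar x hx, hpar' x hx]) (by simp [h111, h111']) hm

/-- The `ℤ/2 × ℤ/2`-Hurwitz–Hodge integrals are uniquely determined by the WDVV
equations, the length-three integrals, and the integrals `⟨ζ₁ⁿ⟩`. -/
theorem klein_four_integrals_unique
    (A A' : (Fin 3 → ℕ) → ℚ)
    -- (i) symmetry under permutations of the three arguments
    (hsymm : ∀ (σ : Equiv.Perm (Fin 3)) (m : Fin 3 → ℕ), A (m ∘ σ) = A m)
    (hsymm' : ∀ (σ : Equiv.Perm (Fin 3)) (m : Fin 3 → ℕ), A' (m ∘ σ) = A' m)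
    -- (ii) monodromy condition: vanishing unless all parities agree
    (hpar : ∀ m : Fin 3 → ℕ, ¬(m 0 % 2 = m 1 % 2 ∧ m 1 % 2 = m 2 % 2) → A m = 0)
    (hpar' : ∀ m : Fin 3 → ℕ, ¬(m 0 % 2 = m 1 % 2 ∧ m 1 % 2 = m 2 % 2) → A' m = 0)
    -- (iii) unstable vanishing
    (huns : ∀ m : Fin 3 → ℕ, m 0 + m 1 + m 2 < 3 → A m = 0)
    (huns' : ∀ m : Fin 3 → ℕ, m 0 + m 1 + m 2 < 3 → A' m = 0)
    -- (iv) the length-three integral ⟨ζ₁ζ₂ζ₃⟩ = 1/4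
    (h111 : A ![1, 1, 1] = 1/4) (h111' : A' ![1, 1, 1] = 1/4)
    -- (v) WDVV equation (W1)
    (hW1 : ∀ m : Fin 3 → ℕ,
      ∑ p ∈ Finset.Icc 0 m, (B m p : ℚ) *
        ∑ c : Fin 3,
          (A (p + e 0 + e 1 + e c) * A (m - p + e c + e 0 + e 1)
            - A (p + e 0 + e 0 + e c) * A (m - p + e c + e 1 + e 1))
      = if m = 0 then 1/16 else 0)
    (hW1' : ∀ m : Fin 3 → ℕ,
      ∑ p ∈ Finset.Icc 0 m, (B m p : ℚ) *
        ∑ c : Fin 3,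
          (A' (p + e 0 + e 1 + e c) * A' (m - p + e c + e 0 + e 1)
            - A' (p + e 0 + e 0 + e c) * A' (m - p + e c + e 1 + e 1))
      = if m = 0 then 1/16 else 0)
    -- (v) WDVV equation (W2)
    (hW2 : ∀ m : Fin 3 → ℕ,
      ∑ p ∈ Finset.Icc 0 m, (B m p : ℚ) *
        ∑ c : Fin 3,
          (A (p + e 0 + e 1 + e c) * A (m - p + e c + e 0 + e 2)
            - A (p + e 0 + e 0 + e c) * A (m - p + e c + e 1 + e 2)) = 0)
    (hW2' : ∀ m : Fin 3 → ℕ,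
      ∑ p ∈ Finset.Icc 0 m, (B m p : ℚ) *
        ∑ c : Fin 3,
          (A' (p + e 0 + e 1 + e c) * A' (m - p + e c + e 0 + e 2)
            - A' (p + e 0 + e 0 + e c) * A' (m - p + e c + e 1 + e 2)) = 0)
    -- agreement of the one-variable specializations ⟨ζ₁ⁿ⟩
    (hspec : ∀ n : ℕ, A ![n, 0, 0] = A' ![n, 0, 0]) :
    A = A' :=
  klein_four_integrals_unique_general A A' hsymm hsymm' hpar hpar' h111 h111' hW1 hW1' hW2 hW2'
    hspec
end
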